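/- Let ρ' be a d×d density matrix with eigendecomposition having eigenvalues λ₁,…,λ_d, and for each j let b_j be the smallest nonnegative integer with 2^{b_j} ≥ dλ_j; set k = 2^{b₁}+…+2^{b_d}. Then σ := (1/3)·(4I_k/k − Split_{b₁,…,b_d}(ρ')) is a valid density matrix (positive semidefinite with trace 1). -/

import Mathlib

open Matrix BigOperators

/-- The index set of `Split`: pairs `(j, s)` with `j ∈ [d]` and `s ∈ {0,1}^{b j}`. -/
abbrev SIdx (d : ℕ) (b : Fin d → ℕ) := Σ j : Fin d, Fin (b j) → Bool

/-- `s` is a prefix of `t` (as bit strings). -/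
def BitPrefix {a c : ℕ} (s : Fin a → Bool) (t : Fin c → Bool) : Prop :=
  ∃ h : a ≤ c, ∀ i : Fin a, t (Fin.castLE h i) = s i

open scoped Classical in
/-- The splitting map `Split_{b₁,…,b_d}`: the entry at `((j₁,s₁),(j₂,s₂))` is
`M_{j₁ j₂} / 2^{max(b_{j₁}, b_{j₂})}` if one of `s₁, s₂` is a prefix of the other,
and `0` otherwise. -/
noncomputable def Split {d : ℕ} (b : Fin d → ℕ) (M : Matrix (Fin d) (Fin d) ℂ) :
    Matrix (SIdx d b) (SIdx d b) ℂ := fun p q =>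
  if BitPrefix p.2 q.2 ∨ BitPrefix q.2 p.2 then
    M p.1 q.1 / 2 ^ max (b p.1) (b q.1) else 0

open scoped Classical in
/-- The dual splitting map `DSplit_{b₁,…,b_d}`: the entry at `((j₁,s₁),(j₂,s₂))` is
`N_{j₁ j₂}` if one of `s₁, s₂` is a prefix of the other, and `0` otherwise. -/
noncomputable def DSplit {d : ℕ} (b : Fin d → ℕ) (N : Matrix (Fin d) (Fin d) ℂ) :
    Matrix (SIdx d b) (SIdx d b) ℂ := fun p q =>
  if BitPrefix p.2 q.2 ∨ BitPrefix q.2 p.2 then N p.1 q.1 else 0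

/-- Frobenius norm of a matrix. -/
noncomputable def frobNorm {n m : Type*} [Fintype n] [Fintype m] (A : Matrix n m ℂ) : ℝ :=
  Real.sqrt (∑ i, ∑ j, ‖A i j‖ ^ 2)

/-- Operator (spectral) norm of a matrix. -/
noncomputable def opNorm {n : Type*} [Fintype n] [DecidableEq n] (A : Matrix n n ℂ) : ℝ :=
  ‖(Matrix.toEuclideanCLM (𝕜 := ℂ) A : EuclideanSpace ℂ n →L[ℂ] EuclideanSpace ℂ n)‖
open scoped ComplexOrder

/-!
In the eigenbasis `Split_b(ρ')` is diagonal, the entry `λ_j / 2 ^ b_j` being repeated `2 ^ b_j`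
times; hence its trace is `∑ λ_j = 1` and its entries are at most `1 / d`. Minimality of `b_j`
gives `2 ^ b_j ≤ 1 + 2 d λ_j`, so `k ≤ 3 d` and `1 / d ≤ 4 / k`: every entry of
`4 I_k / k - Split_b(ρ')` is nonnegative, and its trace is `4 - 1 = 3`.
-/

lemma bitPrefix_refl {a : ℕ} (s : Fin a → Bool) : BitPrefix s s := ⟨le_rfl, fun _ => rfl⟩

lemma bitPrefix_iff_eq {a : ℕ} {s t : Fin a → Bool} : BitPrefix s t ↔ t = s :=
  ⟨fun ⟨_, h⟩ => funext h, by rintro rfl; exact bitPrefix_refl _⟩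

section Split

variable {d : ℕ} (b : Fin d → ℕ)

lemma split_apply_self (M : Matrix (Fin d) (Fin d) ℂ) (p : SIdx d b) :
    Split b M p p = M p.1 p.1 / 2 ^ b p.1 := by
  simp [Split, bitPrefix_refl]

lemma split_diagonal (f : Fin d → ℂ) :
    Split b (diagonal f) = diagonal fun p : SIdx d b => f p.1 / 2 ^ b p.1 := by
  ext p q
  by_cases hpq : p = q
  · subst hpq
    rw [split_apply_self, diagonal_apply_eq, diagonal_apply_eq]
  rw [diagonal_apply_ne _ hpq]
  obtain ⟨j, s⟩ := p
  obtain ⟨j', t⟩ := q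
  by_cases hj : j = j'
  · subst hj
    have hst : s ≠ t := fun h => hpq (h ▸ rfl)
    simp [Split, bitPrefix_iff_eq, hst, Ne.symm hst]
  · simp [Split, diagonal_apply_ne _ hj]

lemma card_sIdx : Fintype.card (SIdx d b) = ∑ j, 2 ^ b j := by
  simp [Fintype.card_sigma]

lemma trace_split (M : Matrix (Fin d) (Fin d) ℂ) : (Split b M).trace = M.trace := by
  rw [trace, Fintype.sum_sigma, trace]
  refine Finset.sum_congr rfl fun j _ => ?_
  simp only [diag_apply, split_apply_self, Finset.sum_const, Finset.card_univ, Fintype.card_fun,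
    Fintype.card_bool, Fintype.card_fin, nsmul_eq_mul]
  push_cast
  field_simp

end Split

lemma posSemidef_smul_one_sub_diagonal {n : Type*} [Fintype n] [DecidableEq n] {c : ℝ}
    {f : n → ℝ} (hf : ∀ i, f i ≤ c) :
    ((c : ℂ) • (1 : Matrix n n ℂ) - diagonal fun i => (f i : ℂ)).PosSemidef := by
  rw [smul_one_eq_diagonal, diagonal_sub, posSemidef_diagonal_iff]
  intro i
  exact_mod_cast sub_nonneg.mpr (hf i)

lemma two_pow_le_one_add_two_mul {x : ℝ} (hx : 0 ≤ x) {b : ℕ}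
    (hmin : ∀ n : ℕ, x ≤ 2 ^ n → b ≤ n) : (2 : ℝ) ^ b ≤ 1 + 2 * x := by
  rcases b with _ | m
  · rw [pow_zero]; linarith
  · have hlt : (2 : ℝ) ^ m < x := by
      by_contra! h
      exact absurd (hmin m h) (by omega)
    rw [pow_succ]
    linarith

lemma sum_two_pow_le_three_mul_card {ι : Type*} [Fintype ι] {lam : ι → ℝ} (hlam : ∀ j, 0 ≤ lam j)
    (hsum : ∑ j, lam j = 1) {b : ι → ℕ}
    (hmin : ∀ j (n : ℕ), (Fintype.card ι : ℝ) * lam j ≤ 2 ^ n → b j ≤ n) :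
    ∑ j, (2 : ℝ) ^ b j ≤ 3 * Fintype.card ι :=
  calc ∑ j, (2 : ℝ) ^ b j ≤ ∑ j, (1 + 2 * (Fintype.card ι * lam j)) :=
        Finset.sum_le_sum fun j _ =>
          two_pow_le_one_add_two_mul (mul_nonneg (Nat.cast_nonneg _) (hlam j)) (hmin j)
    _ = 3 * Fintype.card ι := by
        rw [Finset.sum_add_distrib, ← Finset.mul_sum, ← Finset.mul_sum, hsum]
        simp; ring

/-- Let `ρ'` be a density matrix with eigenvalues `λ`, let `b j` be the
least nonnegative integer with `2^{b j} ≥ d·λ j` and `k = ∑_j 2^{b_j}`.  Then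
`σ = (1/3)(4·I_k/k − Split_b(ρ'))` (with the split taken in the eigenbasis, i.e. of
`diag(λ)`) is a density matrix. -/
theorem recentered_state_density {d : ℕ} (ρ' : Matrix (Fin d) (Fin d) ℂ)
    (hρ' : ρ'.IsHermitian) (hpsd : ρ'.PosSemidef) (htr : ρ'.trace = 1)
    (b : Fin d → ℕ)
    (hb : ∀ j, (d : ℝ) * hρ'.eigenvalues j ≤ 2 ^ (b j))
    (hmin : ∀ j (n : ℕ), (d : ℝ) * hρ'.eigenvalues j ≤ 2 ^ n → b j ≤ n) :
    ((( 3 : ℂ)⁻¹) •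
        ((4 / ((∑ j : Fin d, 2 ^ (b j) : ℕ) : ℂ)) • (1 : Matrix (SIdx d b) (SIdx d b) ℂ) -
          Split b (Matrix.diagonal fun j => (hρ'.eigenvalues j : ℂ)))).PosSemidef ∧
    ((( 3 : ℂ)⁻¹) •
        ((4 / ((∑ j : Fin d, 2 ^ (b j) : ℕ) : ℂ)) • (1 : Matrix (SIdx d b) (SIdx d b) ℂ) -
          Split b (Matrix.diagonal fun j => (hρ'.eigenvalues j : ℂ)))).trace = 1 := by
  set k : ℕ := ∑ j : Fin d, 2 ^ b j with hk
  have hd : 0 < d := Nat.pos_of_ne_zero fun h => by subst h; simp [trace] at htr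
  have hsum : ∑ j, hρ'.eigenvalues j = 1 := by
    have h := hρ'.trace_eq_sum_eigenvalues.symm.trans htr
    simpa using congrArg Complex.re h
  have hk3d : (k : ℝ) ≤ 3 * d := by
    simpa [hk] using
      sum_two_pow_le_three_mul_card hpsd.eigenvalues_nonneg hsum (by simpa using hmin)
  have hkpos : (0 : ℝ) < k :=
    Nat.cast_pos.mpr (Finset.sum_pos (fun j _ => by positivity) ⟨⟨0, hd⟩, Finset.mem_univ _⟩)
  have hdpos : (0 : ℝ) < d := Nat.cast_pos.mpr hd
  have hentry : ∀ p : SIdx d b, hρ'.eigenvalues p.1 / 2 ^ b p.1 ≤ 4 / k := fun p =>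
    calc hρ'.eigenvalues p.1 / 2 ^ b p.1 ≤ 1 / d := by
          rw [div_le_div_iff₀ (by positivity) hdpos]; linarith [hb p.1]
      _ ≤ 4 / k := by rw [div_le_div_iff₀ hdpos hkpos]; linarith
  have hcast : (4 / (k : ℂ)) = ((4 / k : ℝ) : ℂ) := by push_cast; rfl
  constructor
  · rw [hcast, split_diagonal]
    refine PosSemidef.smul ?_ (by positivity)
    exact_mod_cast posSemidef_smul_one_sub_diagonal hentry
  · rw [trace_smul, trace_sub, trace_smul, trace_one, card_sIdx, ← hk, trace_split,
      trace_diagonal, ← Complex.ofReal_sum, hsum]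
    have hk0 : (k : ℂ) ≠ 0 := by exact_mod_cast hkpos.ne'
    simp only [smul_eq_mul, Complex.ofReal_one]
    field_simp
    norm_num
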